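/- arXiv:1212.6471 — 3 statements merged into one kernel-verified Lean document; each statement's English description precedes it below -/
import Mathlib

section
/- Let a ∈ ℂ, δ > 0, and let φ be holomorphic on the punctured disk {u ∈ ℂ : 0 < |u - a| < δ} and have an essential singularity at a, i.e. φ does not extend to a function meromorphic at a. Then for every C ∈ ℂ and every h > 0 there exists C' ∈ ℂ with |C' - C| < h and a sequence (u_j) of pairwise distinct points of the punctured disk such that u_j → a and φ(u_j) = C' for every j. -/
open Metric Set Filter Function Topology

/-- The punctured ball in `ℂ` is path connected. -/
lemma puncturedBall_isPathConnected (a : ℂ) {δ : ℝ} (hδ : 0 < δ) :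
    IsPathConnected (Metric.ball a δ \ {a}) := by
  have h2 : (1 : Cardinal) < Module.rank ℝ ℂ := by
    rw [Complex.rank_real_complex]; norm_num
  have hpc0 : IsPathConnected ({(0 : ℂ)}ᶜ : Set ℂ) :=
    isPathConnected_compl_singleton_of_one_lt_rank h2 0
  set F : ℂ → ℂ := fun z => a + (δ / (1 + ‖z‖)) • z with hF
  have hcont : Continuous F := by
    apply continuous_const.add
    exact (continuous_const.div (continuous_const.add continuous_norm)
      (fun z => (by positivity : (1:ℝ) + ‖z‖ ≠ 0))).smul continuous_id
  have himg : F '' ({(0 : ℂ)}ᶜ : Set ℂ) = Metric.ball a δ \ {a} := by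
    apply Subset.antisymm
    · rintro _ ⟨z, hz, rfl⟩
      have hz0 : z ≠ 0 := hz
      have hzn : 0 < ‖z‖ := norm_pos_iff.2 hz0
      have hden : (0:ℝ) < 1 + ‖z‖ := by positivity
      constructor
      · rw [mem_ball, dist_eq_norm]
        have : F z - a = (δ / (1 + ‖z‖)) • z := by simp [hF]
        rw [this, norm_smul, Real.norm_eq_abs, abs_of_pos (by positivity)]
        rw [div_mul_eq_mul_div, div_lt_iff₀ hden]
        nlinarith
      · simp only [mem_singleton_iff]
        intro hFz
        have : (δ / (1 + ‖z‖)) • z = 0 := by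
          have := sub_eq_zero.2 hFz
          simpa [hF] using this
        rcases smul_eq_zero.1 this with h | h
        · exact absurd h (by positivity)
        · exact hz0 h
    · rintro w ⟨hw1, hw2⟩
      have hwa : w - a ≠ 0 := sub_ne_zero.2 hw2
      have hwn : 0 < ‖w - a‖ := norm_pos_iff.2 hwa
      have hwδ : ‖w - a‖ < δ := by rwa [mem_ball, dist_eq_norm] at hw1
      set t : ℝ := δ - ‖w - a‖ with ht
      have htpos : 0 < t := by simp only [ht]; linarith
      refine ⟨t⁻¹ • (w - a), ?_, ?_⟩
      · simp only [mem_compl_iff, mem_singleton_iff]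
        intro h
        rcases smul_eq_zero.1 h with h | h
        · exact absurd h (by positivity)
        · exact hwa h
      · have hnorm : ‖t⁻¹ • (w - a)‖ = ‖w - a‖ / t := by
          rw [norm_smul, Real.norm_eq_abs, abs_of_pos (by positivity)]
          rw [inv_mul_eq_div]
        have hden : 1 + ‖t⁻¹ • (w - a)‖ = δ / t := by
          rw [hnorm]; field_simp
          rw [ht]; ring
        simp only [hF, hden]
        have hst : δ / (δ / t) = t := by
          field_simp
        rw [hst, smul_smul]
        rw [mul_inv_cancel₀ (ne_of_gt htpos), one_smul]
        ring
  rw [← himg]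
  exact hpc0.image hcont

/-- **Weierstrass' "tiny" Picard theorem.**
If `φ` is holomorphic on the punctured disk `{u : 0 < |u - a| < δ}` and has an essential
singularity at `a` (i.e. it admits no meromorphic extension to `a`), then for every `C : ℂ`
and every `h > 0` there is `C'` with `|C' - C| < h` and a sequence of pairwise distinct
points of the punctured disk converging to `a` on which `φ` takes the value `C'`. -/
theorem weierstrass_tiny_picard (a : ℂ) (δ : ℝ) (hδ : 0 < δ) (φ : ℂ → ℂ)
    (hφ : DifferentiableOn ℂ φ (Metric.ball a δ \ {a}))
    (hess : ¬ MeromorphicAt φ a) :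
    ∀ C : ℂ, ∀ h : ℝ, 0 < h → ∃ C' : ℂ, ‖C' - C‖ < h ∧
      ∃ u : ℕ → ℂ, Function.Injective u ∧
        (∀ j, u j ∈ Metric.ball a δ \ {a}) ∧
        Filter.Tendsto u Filter.atTop (nhds a) ∧
        ∀ j, φ (u j) = C' := by
  intro C h hh
  set U : Set ℂ := Metric.ball a δ \ {a} with hUdef
  have hUopen : IsOpen U := isOpen_ball.sdiff isClosed_singleton
  have hUnhds : U ∈ 𝓝[≠] a := diff_mem_nhdsWithin_compl (ball_mem_nhds a hδ) {a}
  have hanal : AnalyticOnNhd ℂ φ U := hφ.analyticOnNhd hUopen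
  have hconn : IsPreconnected U :=
    (puncturedBall_isPathConnected a hδ).isConnected.isPreconnected
  -- φ is not constant on U
  have hnc : ¬ ∃ w, ∀ z ∈ U, φ z = w := by
    rintro ⟨w, hw⟩
    exact hess (((MeromorphicAt.const w a).congr
      (eventually_of_mem hUnhds fun z hz => (hw z hz).symm)))
  -- open mapping
  have hopen : ∀ r : ℝ, 0 < r → r ≤ δ → IsOpen (φ '' (Metric.ball a r \ {a})) := by
    intro r hr hrδ
    rcases hanal.is_constant_or_isOpen hconn with hc | ho
    · exact absurd hc hnc
    · refine ho _ ?_ (isOpen_ball.sdiff isClosed_singleton)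
      intro z hz
      exact ⟨lt_of_lt_of_le (mem_ball.1 hz.1) hrδ, hz.2⟩
  -- Casorati-Weierstrass
  have hdense : ∀ r : ℝ, 0 < r → r ≤ δ → Dense (φ '' (Metric.ball a r \ {a})) := by
    intro r hr hrδ
    by_contra hd
    rw [dense_iff_inter_open] at hd
    push_neg at hd
    obtain ⟨V, hVopen, ⟨w, hwV⟩, hVint⟩ := hd
    obtain ⟨ε, hε, hball⟩ := Metric.isOpen_iff.1 hVopen w hwV
    have hfar : ∀ z ∈ Metric.ball a r \ {a}, ε ≤ ‖φ z - w‖ := by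
      intro z hz
      by_contra hlt
      push_neg at hlt
      have : φ z ∈ V := hball (by rwa [mem_ball, dist_eq_norm])
      exact (eq_empty_iff_forall_notMem.1 hVint (φ z)) ⟨this, ⟨z, hz, rfl⟩⟩
    have hsub : Metric.ball a r \ {a} ⊆ U := fun z hz =>
      ⟨lt_of_lt_of_le (mem_ball.1 hz.1) hrδ, hz.2⟩
    have hne : ∀ z ∈ Metric.ball a r \ {a}, φ z - w ≠ 0 := by
      intro z hz
      have := hfar z hz
      intro h0
      rw [h0, norm_zero] at this
      linarith
    set g : ℂ → ℂ := fun z => (φ z - w)⁻¹ with hg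
    have hgd : DifferentiableOn ℂ g (Metric.ball a r \ {a}) :=
      (((hφ.mono hsub).sub (differentiableOn_const w)).inv hne)
    have hbdd : BddAbove (norm ∘ g '' (Metric.ball a r \ {a})) := by
      refine ⟨ε⁻¹, ?_⟩
      rintro _ ⟨z, hz, rfl⟩
      simp only [Function.comp_apply, hg, norm_inv]
      exact inv_anti₀ hε (hfar z hz)
    have hrem := Complex.differentiableOn_update_limUnder_of_bddAbove
      (ball_mem_nhds a hr) hgd hbdd
    set G : ℂ → ℂ := Function.update g a (limUnder (𝓝[≠] a) g) with hG
    have hGa : AnalyticAt ℂ G a := hrem.analyticAt (ball_mem_nhds a hr)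
    have hmero : MeromorphicAt ((fun _ => w) + G⁻¹) a :=
      (MeromorphicAt.const w a).add hGa.meromorphicAt.inv
    apply hess
    apply hmero.congr
    have hmem : Metric.ball a r \ {a} ∈ 𝓝[≠] a :=
      diff_mem_nhdsWithin_compl (ball_mem_nhds a hr) {a}
    apply eventually_of_mem hmem
    intro z hz
    have hza : z ≠ a := hz.2
    have : G z = g z := Function.update_of_ne hza _ _
    simp only [Pi.add_apply, Pi.inv_apply, this, hg, inv_inv]
    ring
  -- Baire category: find C'
  have hrpos : ∀ n : ℕ, (0:ℝ) < δ / (n + 1) := fun n => by positivity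
  have hrle : ∀ n : ℕ, δ / (n + 1) ≤ δ := by
    intro n
    rw [div_le_iff₀ (by positivity)]
    nlinarith
  have hbaire : Dense (⋂ n : ℕ, φ '' (Metric.ball a (δ / (n + 1)) \ {a})) :=
    dense_iInter_of_isOpen (fun n => hopen _ (hrpos n) (hrle n))
      (fun n => hdense _ (hrpos n) (hrle n))
  obtain ⟨C', hC'mem, hC'ball⟩ := hbaire.exists_mem_open isOpen_ball
    (nonempty_ball.2 hh)
  refine ⟨C', by rwa [mem_ball, dist_eq_norm] at hC'ball, ?_⟩
  -- key existence
  have key : ∀ ε : ℝ, 0 < ε →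
      ∃ z, z ∈ Metric.ball a δ \ {a} ∧ ‖z - a‖ < ε ∧ φ z = C' := by
    intro ε hε
    obtain ⟨n, hn⟩ := exists_nat_gt (δ / ε)
    have hlt : δ / (n + 1) < ε := by
      rw [div_lt_iff₀ (by positivity)]
      rw [div_lt_iff₀ hε] at hn
      nlinarith
    have := mem_iInter.1 hC'mem n
    obtain ⟨z, hz, hφz⟩ := this
    refine ⟨z, ⟨lt_of_lt_of_le (mem_ball.1 hz.1) (hrle n), hz.2⟩, ?_, hφz⟩
    calc ‖z - a‖ = dist z a := (dist_eq_norm z a).symm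
      _ < δ / (n + 1) := mem_ball.1 hz.1
      _ < ε := hlt
  have key' : ∀ ε : ℝ, ∃ z : ℂ,
      0 < ε → (z ∈ Metric.ball a δ \ {a} ∧ ‖z - a‖ < ε ∧ φ z = C') := by
    intro ε
    by_cases hε : 0 < ε
    · obtain ⟨z, hz⟩ := key ε hε
      exact ⟨z, fun _ => hz⟩
    · exact ⟨a, fun h => absurd h hε⟩
  choose f hf using key'
  -- recursive sequence
  set u : ℕ → ℂ := fun n =>
    Nat.rec (f δ) (fun n z => f (min ‖z - a‖ (1 / (n + 2)))) n with hu
  have hu0 : u 0 = f δ := rfl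
  have husucc : ∀ n, u (n + 1) = f (min ‖u n - a‖ (1 / (n + 2))) := fun n => rfl
  have hmain : ∀ n, u n ∈ Metric.ball a δ \ {a} ∧ φ (u n) = C' ∧
      (∀ m, n = m + 1 → ‖u n - a‖ < min ‖u m - a‖ (1 / (m + 2))) := by
    intro n
    induction n with
    | zero =>
      have := hf δ hδ
      exact ⟨this.1, this.2.2, fun m hm => by omega⟩
    | succ n ih =>
      have hne : u n ≠ a := ih.1.2
      have hpos : (0:ℝ) < min ‖u n - a‖ (1 / (n + 2)) := by
        apply lt_min
        · exact norm_pos_iff.2 (sub_ne_zero.2 hne)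
        · positivity
      have := hf (min ‖u n - a‖ (1 / (n + 2))) hpos
      rw [← husucc n] at this
      refine ⟨this.1, this.2.2, fun m hm => ?_⟩
      have : n = m := by omega
      subst this
      exact (hf _ hpos).2.1
  have hstep : ∀ n, ‖u (n + 1) - a‖ < min ‖u n - a‖ (1 / (n + 2)) :=
    fun n => (hmain (n + 1)).2.2 n rfl
  have hanti : StrictAnti (fun n => ‖u n - a‖) := by
    apply strictAnti_nat_of_succ_lt
    intro n
    exact lt_of_lt_of_le (hstep n) (min_le_left _ _)
  have hinj : Function.Injective u := by
    intro i j hij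
    by_contra hne
    rcases lt_or_gt_of_ne hne with h | h
    · exact absurd (congrArg (fun z => ‖z - a‖) hij) (ne_of_gt (hanti h))
    · exact absurd (congrArg (fun z => ‖z - a‖) hij) (ne_of_lt (hanti h))
  have htend : Filter.Tendsto u Filter.atTop (nhds a) := by
    rw [tendsto_iff_dist_tendsto_zero]
    have hb : ∀ n, dist (u (n + 1)) a ≤ 1 / (n + 1) := by
      intro n
      rw [dist_eq_norm]
      have h1 : ‖u (n + 1) - a‖ < 1 / (n + 2) :=
        lt_of_lt_of_le (hstep n) (min_le_right _ _)
      have h2 : (1:ℝ) / (n + 2) ≤ 1 / (n + 1) := by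
        apply div_le_div_of_nonneg_left one_pos.le (by positivity)
        linarith
      linarith
    have hsq : Filter.Tendsto (fun n => dist (u (n + 1)) a) Filter.atTop (nhds 0) := by
      apply squeeze_zero (fun n => dist_nonneg) hb
      exact tendsto_one_div_add_atTop_nhds_zero_nat
    exact (tendsto_add_atTop_iff_nat 1).1 hsq
  exact ⟨u, hinj, fun j => (hmain j).1, htend, fun j => (hmain j).2.1⟩
end

section
/- Let Ω ⊆ ℂ be open and connected, let n ≥ 1, and let p_0, p_1, …, p_n be holomorphic on Ω with p_0 not identically zero; let Z := {u ∈ Ω : p_0(u) = 0}. Suppose f is holomorphic on Ω \ Z and satisfies p_0(u) f(u)^n + p_1(u) f(u)^{n-1} + ⋯ + p_n(u) = 0 for all u ∈ Ω \ Z. Then f is meromorphic on Ω: f extends to a function holomorphic on Ω except possibly for poles at the points of Z. -/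
open Metric Set Topology Filter

/-- **A single-valued algebroid function is meromorphic.**
Let `Ω` be open and connected, let `p 0, p 1, …, p n` be holomorphic on `Ω` with `p 0` not
identically zero, and let `Z` be the zero set of `p 0` in `Ω`.  If `f` is holomorphic on
`Ω \ Z` and satisfies `p 0 u * f u ^ n + p 1 u * f u ^ (n-1) + ⋯ + p n u = 0` there, then
`f` extends to a function holomorphic on `Ω` except possibly for poles at the points
of `Z`. -/
theorem algebroid_single_valued_meromorphic
    (Ω : Set ℂ) (hΩ : IsOpen Ω) (hΩconn : IsConnected Ω)
    (n : ℕ) (hn : 1 ≤ n)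
    (p : Fin (n + 1) → ℂ → ℂ) (hp : ∀ i, DifferentiableOn ℂ (p i) Ω)
    (hp0 : ∃ u ∈ Ω, p 0 u ≠ 0)
    (Z : Set ℂ) (hZ : Z = {u ∈ Ω | p 0 u = 0})
    (f : ℂ → ℂ) (hf : DifferentiableOn ℂ f (Ω \ Z))
    (heq : ∀ u ∈ Ω \ Z, ∑ i : Fin (n + 1), p i u * f u ^ (n - (i : ℕ)) = 0) :
    ∃ g : ℂ → ℂ, Set.EqOn g f (Ω \ Z) ∧
      (∀ u ∈ Ω \ Z, AnalyticAt ℂ g u) ∧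
      (∀ u ∈ Z, MeromorphicAt g u) := by
  subst hZ
  have hp0an : AnalyticOnNhd ℂ (p 0) Ω := (hp 0).analyticOnNhd hΩ
  have hUeq : Ω \ {u ∈ Ω | p 0 u = 0} = Ω ∩ p 0 ⁻¹' {(0:ℂ)}ᶜ := by
    ext u; simp [mem_diff]
  have hU : IsOpen (Ω \ {u ∈ Ω | p 0 u = 0}) := by
    rw [hUeq]
    exact (hp 0).continuousOn.isOpen_inter_preimage hΩ (isOpen_compl_singleton)
  refine ⟨f, fun u _ => rfl, ?_, ?_⟩
  · exact fun u hu => (hf.analyticOnNhd hU) u hu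
  · intro z hz
    obtain ⟨hzΩ, hz0⟩ := hz
    have hev : ∀ᶠ u in 𝓝[≠] z, p 0 u ≠ 0 := by
      rcases (hp0an z hzΩ).eventually_eq_zero_or_eventually_ne_zero with h | h
      · exfalso
        obtain ⟨v, hv, hvne⟩ := hp0
        exact hvne (hp0an.eqOn_zero_of_preconnected_of_eventuallyEq_zero
          hΩconn.isPreconnected hzΩ (by exact h) hv)
      · exact h
    have hevΩ : ∀ᶠ u in 𝓝 z, u ∈ Ω := hΩ.mem_nhds hzΩ
    have hev' : ∀ᶠ u in 𝓝 z, u ∈ Ω ∧ (u ≠ z → p 0 u ≠ 0) :=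
      hevΩ.and (eventually_nhdsWithin_iff.mp hev)
    obtain ⟨R, hR, hballR⟩ := Metric.eventually_nhds_iff_ball.mp hev'
    set r := R / 2 with hrdef
    have hr : 0 < r := by positivity
    have hbr : closedBall z r ⊆ ball z R := by
      apply closedBall_subset_ball; rw [hrdef]; linarith
    have hball : ∀ u ∈ closedBall z r, u ∈ Ω ∧ (u ≠ z → p 0 u ≠ 0) :=
      fun u hu => hballR u (hbr hu)
    have hsubΩ' : closedBall z r ⊆ Ω := fun u hu => (hball u hu).1
    have hsubΩ : ball z r ⊆ Ω := ball_subset_closedBall.trans hsubΩ'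
    have hsub : ball z r \ {z} ⊆ Ω \ {u ∈ Ω | p 0 u = 0} := by
      rintro u ⟨hu, hune⟩
      refine ⟨hsubΩ hu, ?_⟩
      simp only [mem_setOf_eq, not_and]
      exact fun _ => (hball u (ball_subset_closedBall hu)).2 (by simpa using hune)
    have hC : ∀ i : Fin (n+1), ∃ C, 0 ≤ C ∧ ∀ x ∈ closedBall z r, ‖p i x‖ ≤ C := by
      intro i
      obtain ⟨C, hCb⟩ := (isCompact_closedBall z r).exists_bound_of_continuousOn
        ((hp i).continuousOn.mono hsubΩ')
      exact ⟨max C 0, le_max_right _ _, fun x hx => le_max_of_le_left (hCb x hx)⟩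
    choose C hC0 hCle using hC
    set B : ℝ := C 0 + ∑ i : Fin n, C i.succ with hB
    have hBsum : 0 ≤ ∑ i : Fin n, C i.succ := Finset.sum_nonneg fun i _ => hC0 _
    have hbound : ∀ u ∈ ball z r \ {z}, ‖p 0 u * f u‖ ≤ B := by
      intro u hu
      have he := heq u (hsub hu)
      rw [Fin.sum_univ_succ] at he
      simp only [Fin.val_succ, Fin.val_zero, Nat.sub_zero] at he
      set A := f u with hA
      have hs : p 0 u * A ^ n = -∑ i : Fin n, p i.succ u * A ^ (n - (↑i + 1)) :=
        eq_neg_of_add_eq_zero_left he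
      have hcb : u ∈ closedBall z r := ball_subset_closedBall hu.1
      rcases le_or_gt ‖A‖ 1 with hA1 | hA1
      · calc ‖p 0 u * A‖ = ‖p 0 u‖ * ‖A‖ := norm_mul _ _
          _ ≤ C 0 * 1 := mul_le_mul (hCle 0 u hcb) hA1 (norm_nonneg _) (hC0 0)
          _ = C 0 := mul_one _
          _ ≤ B := le_add_of_nonneg_right hBsum
      · have hApos : (0:ℝ) < ‖A‖ := lt_trans one_pos hA1
        have h1 : ‖p 0 u * A ^ n‖ ≤ (∑ i : Fin n, C i.succ) * ‖A‖ ^ (n-1) := by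
          rw [hs, norm_neg]
          calc ‖∑ i : Fin n, p i.succ u * A ^ (n - (↑i + 1))‖
              ≤ ∑ i : Fin n, ‖p i.succ u * A ^ (n - (↑i + 1))‖ := norm_sum_le _ _
            _ ≤ ∑ i : Fin n, C i.succ * ‖A‖ ^ (n-1) := by
                apply Finset.sum_le_sum
                intro i _
                rw [norm_mul, norm_pow]
                refine mul_le_mul (hCle _ u hcb) ?_ (by positivity) (hC0 _)
                exact pow_le_pow_right₀ hA1.le (by omega)
            _ = (∑ i : Fin n, C i.succ) * ‖A‖ ^ (n-1) := by rw [Finset.sum_mul]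
        have h2 : ‖p 0 u * A ^ n‖ = ‖p 0 u * A‖ * ‖A‖ ^ (n-1) := by
          have hpow : A ^ n = A * A ^ (n-1) := by
            conv_lhs => rw [show n = 1 + (n-1) by omega]
            rw [pow_add, pow_one]
          rw [hpow, ← mul_assoc, norm_mul, norm_pow]
        rw [h2] at h1
        have h3 : ‖p 0 u * A‖ ≤ ∑ i : Fin n, C i.succ :=
          le_of_mul_le_mul_right h1 (by positivity)
        exact h3.trans (le_add_of_nonneg_left (hC0 0))
    set h : ℂ → ℂ := fun u => p 0 u * f u with hh
    have hd : DifferentiableOn ℂ h (ball z r \ {z}) :=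
      ((hp 0).mono (hsub.trans diff_subset)).mul (hf.mono hsub)
    have hb : BddAbove (norm ∘ h '' (ball z r \ {z})) := by
      refine ⟨B, ?_⟩
      rintro x ⟨u, hu, rfl⟩
      exact hbound u hu
    have hH : DifferentiableOn ℂ (Function.update h z (limUnder (𝓝[≠] z) h)) (ball z r) :=
      Complex.differentiableOn_update_limUnder_of_bddAbove (ball_mem_nhds z hr) hd hb
    set H := Function.update h z (limUnder (𝓝[≠] z) h) with hHdef
    have hHan : AnalyticAt ℂ H z :=
      (hH.analyticOnNhd isOpen_ball) z (mem_ball_self hr)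
    have hm : MeromorphicAt (fun u => H u / p 0 u) z :=
      hHan.meromorphicAt.div (hp0an z hzΩ).meromorphicAt
    apply hm.congr
    have hmem : ∀ᶠ u in 𝓝[≠] z, u ∈ ball z r :=
      eventually_nhdsWithin_of_eventually_nhds (isOpen_ball.mem_nhds (mem_ball_self hr))
    filter_upwards [hmem, self_mem_nhdsWithin] with u hu hune
    have hune' : u ≠ z := hune
    have hp0u : p 0 u ≠ 0 := (hball u (ball_subset_closedBall hu)).2 hune'
    simp only [hHdef, Function.update_of_ne hune', hh]
    exact mul_div_cancel_left₀ _ hp0u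
end

section
/- Let f : ℂ × ℤ → ℂ be such that for every n ∈ ℤ the function u ↦ f(u, n) is differentiable (holomorphic) on ℂ, and f(u, 0) = u for all u ∈ ℂ. Suppose there is a function r : ℤ × ℤ → ℤ such that f(u, n) + f(v, m) = f(u + v, r(n, m)) for all u, v ∈ ℂ and all n, m ∈ ℤ. Then there exists ψ : ℤ → ℂ with ψ(0) = 0 such that f(u, n) = u + ψ(n) for all u ∈ ℂ and n ∈ ℤ, and ψ(n) + ψ(m) = ψ(r(n, m)) for all n, m ∈ ℤ. -/
/-- **Forsyth's functional equation.**
Suppose `f : ℂ × ℤ → ℂ` is holomorphic in its first variable for every index `n`, with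
`f (u, 0) = u`, and satisfies `f (u, n) + f (v, m) = f (u + v, r (n, m))` for an
integer-valued function `r` of the indices.  Then `f (u, n) = u + ψ n` for a function
`ψ : ℤ → ℂ` with `ψ 0 = 0` which is additive along `r`:
`ψ n + ψ m = ψ (r (n, m))`. -/
theorem forsyth_functional_equation (f : ℂ × ℤ → ℂ)
    (hf : ∀ n : ℤ, Differentiable ℂ (fun u : ℂ => f (u, n)))
    (hf0 : ∀ u : ℂ, f (u, 0) = u)
    (r : ℤ × ℤ → ℤ)
    (hfe : ∀ (u v : ℂ) (n m : ℤ), f (u, n) + f (v, m) = f (u + v, r (n, m))) :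
    ∃ ψ : ℤ → ℂ, ψ 0 = 0 ∧
      (∀ (u : ℂ) (n : ℤ), f (u, n) = u + ψ n) ∧
      ∀ n m : ℤ, ψ n + ψ m = ψ (r (n, m)) := by
  refine ⟨fun n => f (0, n), hf0 0, ?_, ?_⟩
  · intro u n
    have h1 : f (u, n) + f (0, 0) = f (u, r (n, 0)) := by
      simpa using hfe u 0 n 0
    have h2 : f (0, n) + f (u, 0) = f (u, r (n, 0)) := by
      simpa using hfe 0 u n 0
    rw [hf0] at h1 h2
    rw [add_zero] at h1
    rw [h1, ← h2, add_comm]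
  · intro n m
    simpa using hfe 0 0 n m
end
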